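/- Let ε > 0 and let Z₁, Z₂ be independent real random variables on a probability space, each with law having density z ↦ (ε/2)·exp(−ε·|z|) with respect to Lebesgue measure. For every real x ≥ 0, P(Z₂ − Z₁ ≤ x) = 1 − (exp(−ε·x)/2)·(1 + ε·x/2). -/

import Mathlib

open MeasureTheory Real ProbabilityTheory Set

/-! By independence, the law of `(Z₁, Z₂)` is the product of the two Laplace laws, so
`P(Z₂ - Z₁ ≤ x) = ∫ f(z) F(z + x) dz`, where `f` is the Laplace density and `F` its distribution
function. For `x ≥ 0` the integrand is an explicit combination of exponentials on each of
`(-∞, -x]`, `[-x, 0]` and `(0, ∞)`, and the three elementary integrals add up to the claim. -/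

theorem ProbabilityTheory.IndepFun.measure_sub_le_eq_lintegral {Ω : Type*} [MeasurableSpace Ω]
    {P : Measure Ω} [IsFiniteMeasure P] {X Y : Ω → ℝ}
    (hX : AEMeasurable X P) (hY : AEMeasurable Y P) (hXY : IndepFun X Y P) (x : ℝ) :
    P {ω | Y ω - X ω ≤ x} = ∫⁻ z, P.map Y (Iic (z + x)) ∂P.map X := by
  have hS : MeasurableSet {p : ℝ × ℝ | p.2 - p.1 ≤ x} :=
    measurableSet_le (measurable_snd.sub measurable_fst) measurable_const
  have hslice (z : ℝ) : Prod.mk z ⁻¹' {p : ℝ × ℝ | p.2 - p.1 ≤ x} = Iic (z + x) := by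
    ext; simp [add_comm]
  calc P {ω | Y ω - X ω ≤ x} = P.map (fun ω => (X ω, Y ω)) {p | p.2 - p.1 ≤ x} := by
        rw [Measure.map_apply_of_aemeasurable (hX.prodMk hY) hS]; rfl
    _ = ((P.map X).prod (P.map Y)) {p | p.2 - p.1 ≤ x} := by
        rw [(indepFun_iff_map_prod_eq_prod_map_map hX hY).1 hXY]
    _ = ∫⁻ z, P.map Y (Iic (z + x)) ∂P.map X := by simp_rw [Measure.prod_apply hS, hslice]

lemma intervalIntegral_exp_mul {c : ℝ} (hc : c ≠ 0) (a b : ℝ) :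
    ∫ z in a..b, exp (c * z) = (exp (c * b) - exp (c * a)) / c := by
  rw [intervalIntegral.integral_comp_mul_left exp hc, integral_exp, smul_eq_mul, inv_mul_eq_div]

noncomputable def laplacePDF (ε z : ℝ) : ℝ := ε / 2 * exp (-ε * |z|)

noncomputable def laplaceCDF (ε t : ℝ) : ℝ :=
  if t ≤ 0 then exp (ε * t) / 2 else 1 - exp (-(ε * t)) / 2

noncomputable def laplaceMeasure (ε : ℝ) : Measure ℝ :=
  volume.withDensity fun z => ENNReal.ofReal (laplacePDF ε z)

section Laplace

variable {ε : ℝ}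

lemma laplacePDF_of_nonpos {z : ℝ} (hz : z ≤ 0) : laplacePDF ε z = ε / 2 * exp (ε * z) := by
  rw [laplacePDF, abs_of_nonpos hz, neg_mul_neg]

lemma laplacePDF_of_nonneg {z : ℝ} (hz : 0 ≤ z) : laplacePDF ε z = ε / 2 * exp (-ε * z) := by
  rw [laplacePDF, abs_of_nonneg hz]

lemma laplacePDF_nonneg (hε : 0 ≤ ε) (z : ℝ) : 0 ≤ laplacePDF ε z := by
  unfold laplacePDF; positivity

@[fun_prop]
lemma continuous_laplacePDF : Continuous (laplacePDF ε) := by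
  unfold laplacePDF; fun_prop

lemma laplaceCDF_of_nonpos {t : ℝ} (ht : t ≤ 0) : laplaceCDF ε t = exp (ε * t) / 2 :=
  if_pos ht

lemma laplaceCDF_of_nonneg {t : ℝ} (ht : 0 ≤ t) : laplaceCDF ε t = 1 - exp (-(ε * t)) / 2 := by
  rcases ht.eq_or_lt with rfl | ht
  · norm_num [laplaceCDF]
  · exact if_neg ht.not_ge

@[fun_prop]
lemma measurable_laplaceCDF : Measurable (laplaceCDF ε) :=
  Measurable.ite measurableSet_Iic (by fun_prop) (by fun_prop)

lemma laplaceCDF_mem_Icc (hε : 0 ≤ ε) (t : ℝ) : laplaceCDF ε t ∈ Icc 0 1 := by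
  rcases le_total t 0 with ht | ht
  · have : exp (ε * t) ≤ 1 := exp_le_one_iff.2 (mul_nonpos_of_nonneg_of_nonpos hε ht)
    rw [laplaceCDF_of_nonpos ht]
    constructor <;> linarith [exp_pos (ε * t)]
  · have : exp (-(ε * t)) ≤ 1 := exp_le_one_iff.2 (neg_nonpos.2 (mul_nonneg hε ht))
    rw [laplaceCDF_of_nonneg ht]
    constructor <;> linarith [exp_pos (-(ε * t))]

lemma integrable_laplacePDF (hε : 0 < ε) : Integrable (laplacePDF ε) := by
  rw [← integrableOn_univ, ← Iic_union_Ioi (a := (0 : ℝ))]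
  refine .union ?_ ?_
  · exact IntegrableOn.congr_fun ((integrableOn_exp_mul_Iic hε 0).const_mul _)
      (fun z hz => (laplacePDF_of_nonpos hz).symm) measurableSet_Iic
  · exact IntegrableOn.congr_fun ((integrableOn_exp_mul_Ioi (neg_lt_zero.2 hε) 0).const_mul _)
      (fun z hz => (laplacePDF_of_nonneg (le_of_lt hz)).symm) measurableSet_Ioi

lemma setIntegral_Iic_laplacePDF (hε : 0 < ε) (t : ℝ) :
    ∫ z in Iic t, laplacePDF ε z = laplaceCDF ε t := by
  have hIic : ∀ {s : ℝ}, s ≤ 0 → ∫ z in Iic s, laplacePDF ε z = exp (ε * s) / 2 := by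
    intro s hs
    rw [setIntegral_congr_fun measurableSet_Iic
      (fun z (hz : z ≤ s) => laplacePDF_of_nonpos (hz.trans hs)),
      integral_const_mul, integral_exp_mul_Iic hε]
    field_simp
  rcases le_or_gt t 0 with ht | ht
  · rw [hIic ht, laplaceCDF_of_nonpos ht]
  rw [← sub_add_cancel (∫ z in Iic t, laplacePDF ε z) (∫ z in Iic 0, laplacePDF ε z),
    intervalIntegral.integral_Iic_sub_Iic (integrable_laplacePDF hε).integrableOn
      (integrable_laplacePDF hε).integrableOn,
    intervalIntegral.integral_congr (g := fun z => ε / 2 * exp (-ε * z))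
      (fun z hz => laplacePDF_of_nonneg (by simp [uIcc_of_le ht.le] at hz; exact hz.1)),
    intervalIntegral.integral_const_mul, intervalIntegral_exp_mul (neg_ne_zero.2 hε.ne'),
    hIic le_rfl, laplaceCDF_of_nonneg ht.le]
  simp only [mul_zero, exp_zero]
  field_simp
  ring

lemma laplaceMeasure_Iic (hε : 0 < ε) (t : ℝ) :
    laplaceMeasure ε (Iic t) = ENNReal.ofReal (laplaceCDF ε t) := by
  rw [laplaceMeasure, withDensity_apply _ measurableSet_Iic,
    ← ofReal_integral_eq_lintegral_ofReal (integrable_laplacePDF hε).integrableOn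
      (ae_of_all _ (laplacePDF_nonneg hε.le)),
    setIntegral_Iic_laplacePDF hε]

variable {x : ℝ}

lemma integrable_laplacePDF_mul_laplaceCDF (hε : 0 < ε) :
    Integrable fun z => laplacePDF ε z * laplaceCDF ε (z + x) :=
  (integrable_laplacePDF hε).mul_bdd
    (measurable_laplaceCDF.comp (measurable_add_const x)).aestronglyMeasurable
    (c := 1) (ae_of_all _ fun z => by
      obtain ⟨h0, h1⟩ := laplaceCDF_mem_Icc hε.le (z + x)
      rwa [norm_of_nonneg h0])

lemma lintegral_laplaceMeasure_Iic_add (hε : 0 < ε) :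
    ∫⁻ z, laplaceMeasure ε (Iic (z + x)) ∂laplaceMeasure ε =
      ENNReal.ofReal (∫ z, laplacePDF ε z * laplaceCDF ε (z + x)) := by
  simp_rw [laplaceMeasure_Iic hε]
  rw [laplaceMeasure, lintegral_withDensity_eq_lintegral_mul _ (by fun_prop) (by fun_prop),
    ofReal_integral_eq_lintegral_ofReal (integrable_laplacePDF_mul_laplaceCDF hε)
      (ae_of_all _ fun z => mul_nonneg (laplacePDF_nonneg hε.le z)
        (laplaceCDF_mem_Icc hε.le (z + x)).1)]
  simp_rw [Pi.mul_apply, ← ENNReal.ofReal_mul (laplacePDF_nonneg hε.le _)]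

lemma setIntegral_Iic_neg_laplacePDF_mul_laplaceCDF (hε : 0 < ε) (hx : 0 ≤ x) :
    ∫ z in Iic (-x), laplacePDF ε z * laplaceCDF ε (z + x) = exp (-(ε * x)) / 8 := by
  have hcong (z : ℝ) (hz : z ∈ Iic (-x)) :
      laplacePDF ε z * laplaceCDF ε (z + x) = ε / 4 * exp (ε * x) * exp (2 * ε * z) := by
    rw [laplacePDF_of_nonpos (by linarith [mem_Iic.1 hz]),
      laplaceCDF_of_nonpos (by linarith [mem_Iic.1 hz]),
      show 2 * ε * z = ε * z + ε * z by ring, exp_add, mul_add, exp_add]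
    ring
  rw [setIntegral_congr_fun measurableSet_Iic hcong, integral_const_mul,
    integral_exp_mul_Iic (by positivity), mul_div_assoc', mul_assoc, ← exp_add]
  field_simp
  ring_nf

lemma intervalIntegral_laplacePDF_mul_laplaceCDF (hε : 0 < ε) (hx : 0 ≤ x) :
    ∫ z in -x..0, laplacePDF ε z * laplaceCDF ε (z + x) =
      (1 - exp (-(ε * x))) / 2 - ε * x * exp (-(ε * x)) / 4 := by
  have hcong (z : ℝ) (hz : z ∈ uIcc (-x) 0) :
      laplacePDF ε z * laplaceCDF ε (z + x) = ε / 2 * exp (ε * z) - ε / 4 * exp (-(ε * x)) := by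
    rw [uIcc_of_le (by linarith)] at hz
    rw [laplacePDF_of_nonpos hz.2, laplaceCDF_of_nonneg (by linarith [hz.1]),
      show -(ε * x) = ε * z + -(ε * (z + x)) by ring, exp_add]
    ring
  rw [intervalIntegral.integral_congr hcong,
    intervalIntegral.integral_sub (Continuous.intervalIntegrable (by fun_prop) _ _)
      intervalIntegrable_const, intervalIntegral.integral_const_mul,
    intervalIntegral_exp_mul hε.ne', intervalIntegral.integral_const, smul_eq_mul,
    mul_zero, exp_zero]
  field_simp
  ring_nf

lemma setIntegral_Ioi_zero_laplacePDF_mul_laplaceCDF (hε : 0 < ε) (hx : 0 ≤ x) :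
    ∫ z in Ioi 0, laplacePDF ε z * laplaceCDF ε (z + x) = 1 / 2 - exp (-(ε * x)) / 8 := by
  have hcong (z : ℝ) (hz : z ∈ Ioi 0) : laplacePDF ε z * laplaceCDF ε (z + x) =
      ε / 2 * exp (-ε * z) - ε / 4 * exp (-(ε * x)) * exp (-(2 * ε) * z) := by
    rw [laplacePDF_of_nonneg (le_of_lt hz), laplaceCDF_of_nonneg (by linarith [mem_Ioi.1 hz]),
      show -(2 * ε) * z = -ε * z + -ε * z by ring, exp_add,
      show -(ε * (z + x)) = -ε * z + -(ε * x) by ring, exp_add]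
    ring
  rw [setIntegral_congr_fun measurableSet_Ioi hcong,
    integral_sub ((integrableOn_exp_mul_Ioi (by linarith) 0).const_mul _)
      ((integrableOn_exp_mul_Ioi (by linarith) 0).const_mul _),
    integral_const_mul, integral_const_mul, integral_exp_mul_Ioi (by linarith),
    integral_exp_mul_Ioi (by linarith)]
  simp only [mul_zero, exp_zero]
  field_simp
  ring

lemma integral_laplacePDF_mul_laplaceCDF (hε : 0 < ε) (hx : 0 ≤ x) :
    ∫ z, laplacePDF ε z * laplaceCDF ε (z + x) = 1 - exp (-(ε * x)) / 2 * (1 + ε * x / 2) := by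
  have hint := integrable_laplacePDF_mul_laplaceCDF (x := x) hε
  rw [← integral_add_compl measurableSet_Iic hint, compl_Iic,
    ← sub_add_cancel (∫ z in Iic 0, _) (∫ z in Iic (-x), _),
    intervalIntegral.integral_Iic_sub_Iic hint.integrableOn hint.integrableOn,
    intervalIntegral_laplacePDF_mul_laplaceCDF hε hx,
    setIntegral_Iic_neg_laplacePDF_mul_laplaceCDF hε hx,
    setIntegral_Ioi_zero_laplacePDF_mul_laplaceCDF hε hx]
  ring

end Laplace

theorem prob_laplace_diff_le {Ω : Type*} [MeasurableSpace Ω]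
    (P : Measure Ω) [IsProbabilityMeasure P]
    (ε : ℝ) (hε : 0 < ε) (Z₁ Z₂ : Ω → ℝ)
    (hZ₁ : Measurable Z₁) (hZ₂ : Measurable Z₂)
    (hindep : IndepFun Z₁ Z₂ P)
    (hlaw₁ : Measure.map Z₁ P =
      volume.withDensity (fun z => ENNReal.ofReal (ε / 2 * Real.exp (-ε * |z|))))
    (hlaw₂ : Measure.map Z₂ P =
      volume.withDensity (fun z => ENNReal.ofReal (ε / 2 * Real.exp (-ε * |z|))))
    (x : ℝ) (hx : 0 ≤ x) :
    P {ω | Z₂ ω - Z₁ ω ≤ x} =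
      ENNReal.ofReal (1 - Real.exp (-ε * x) / 2 * (1 + ε * x / 2)) := by
  change _ = laplaceMeasure ε at hlaw₁ hlaw₂
  rw [hindep.measure_sub_le_eq_lintegral hZ₁.aemeasurable hZ₂.aemeasurable, hlaw₁, hlaw₂,
    lintegral_laplaceMeasure_Iic_add hε, integral_laplacePDF_mul_laplaceCDF hε hx, neg_mul]
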